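/- Let B ≥ 2, let C be a B×B real diagonal matrix with positive diagonal entries (hence positive definite), let v ∈ ℝ^B be the all-ones vector, and let D be the (B−1)×B real matrix whose i-th row (i = 1,…,B−1) has entry +1 in column i+1, entry −1 in column 1, and 0 elsewhere (the TDOA differencing matrix with anchor 1 as reference). Then D · C · Dᵀ is invertible and Dᵀ · (D · C · Dᵀ)⁻¹ · D = C⁻¹ − (vᵀ · C⁻¹ · v)⁻¹ • (C⁻¹ · v) · (vᵀ · C⁻¹), where vᵀ·C⁻¹·v > 0. -/

import Mathlib

open Matrix

lemma tdoa_aux (B' : ℕ) (d : Fin (B' + 1) → ℝ) (hd : ∀ b, 0 < d b)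
    (D : Matrix (Fin B') (Fin (B' + 1)) ℝ)
    (hD : ∀ i j, D i j = if (j : ℕ) = (i : ℕ) + 1 then 1
      else if (j : ℕ) = 0 then -1 else 0) :
    IsUnit (D * Matrix.diagonal d * Dᵀ).det ∧
    0 < (fun _ => (1:ℝ)) ⬝ᵥ (Matrix.diagonal d)⁻¹ *ᵥ (fun _ => (1:ℝ)) ∧
    Dᵀ * (D * Matrix.diagonal d * Dᵀ)⁻¹ * D
      = (Matrix.diagonal d)⁻¹ -
        ((fun _ => (1:ℝ)) ⬝ᵥ (Matrix.diagonal d)⁻¹ *ᵥ (fun _ => (1:ℝ)))⁻¹ •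
          Matrix.vecMulVec ((Matrix.diagonal d)⁻¹ *ᵥ (fun _ => (1:ℝ)))
            ((fun _ => (1:ℝ)) ᵥ* (Matrix.diagonal d)⁻¹) := by
  have hdne : ∀ k, d k ≠ 0 := fun k => (hd k).ne'
  set s : ℝ := ∑ k : Fin (B' + 1), (d k)⁻¹ with hs
  have hspos : 0 < s := Finset.sum_pos (fun k _ => inv_pos.2 (hd k)) Finset.univ_nonempty
  have hsne : s ≠ 0 := hspos.ne'
  have hsum : ∑ k : Fin B', (d k.succ)⁻¹ = s - (d 0)⁻¹ := by
    rw [hs, Fin.sum_univ_succ]; ring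
  -- entries of D
  have hDsucc : ∀ (i k : Fin B'), D i k.succ = if k = i then 1 else 0 := by
    intro i k
    rw [hD]
    simp [Fin.val_succ, Fin.val_inj]
  have hD0 : ∀ i : Fin B', D i (0 : Fin (B' + 1)) = -1 := by
    intro i
    rw [hD]
    simp
  -- entries of M = D C Dᵀ
  have hM : ∀ i j, (D * Matrix.diagonal d * Dᵀ) i j
      = (if i = j then d i.succ else 0) + d 0 := by
    intro i j
    have h1 : (D * Matrix.diagonal d * Dᵀ) i j = ∑ k, D i k * d k * D j k := by
      rw [Matrix.mul_apply]
      refine Finset.sum_congr rfl fun k _ => ?_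
      rw [Matrix.mul_diagonal, Matrix.transpose_apply]
    rw [h1, Fin.sum_univ_succ]
    simp only [hD0, hDsucc]
    have h2 : ∀ k : Fin B', (if k = i then (1:ℝ) else 0) * d k.succ * (if k = j then 1 else 0)
        = if k = i then (if i = j then d i.succ else 0) else 0 := by
      intro k
      split_ifs <;> subst_vars <;> simp_all
    rw [Finset.sum_congr rfl fun k _ => h2 k, Finset.sum_ite_eq']
    simp only [Finset.mem_univ, if_true]
    ring
  -- explicit inverse of M
  set N : Matrix (Fin B') (Fin B') ℝ := Matrix.of fun i j =>
    (if i = j then (d i.succ)⁻¹ else 0) - s⁻¹ * ((d i.succ)⁻¹ * (d j.succ)⁻¹) with hN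
  have hNapp : ∀ i j, N i j
      = (if i = j then (d i.succ)⁻¹ else 0) - s⁻¹ * ((d i.succ)⁻¹ * (d j.succ)⁻¹) :=
    fun i j => rfl
  have hMN : (D * Matrix.diagonal d * Dᵀ) * N = 1 := by
    ext i j
    rw [Matrix.mul_apply]
    simp only [hM, hNapp]
    have expand : ∀ k : Fin B',
        ((if i = k then d i.succ else 0) + d 0) *
          ((if k = j then (d k.succ)⁻¹ else 0) - s⁻¹ * ((d k.succ)⁻¹ * (d j.succ)⁻¹))
        = (if i = k then (if i = j then d i.succ * (d j.succ)⁻¹ else 0) else 0)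
          - (if i = k then s⁻¹ * (d i.succ * ((d i.succ)⁻¹ * (d j.succ)⁻¹)) else 0)
          + (if k = j then d 0 * (d j.succ)⁻¹ else 0)
          - d 0 * s⁻¹ * (d j.succ)⁻¹ * (d k.succ)⁻¹ := by
      intro k
      split_ifs <;> subst_vars <;> try ring
      all_goals exact absurd rfl (by assumption)
    rw [Finset.sum_congr rfl fun k _ => expand k]
    rw [Finset.sum_sub_distrib, Finset.sum_add_distrib, Finset.sum_sub_distrib,
      Finset.sum_ite_eq, Finset.sum_ite_eq, Finset.sum_ite_eq', ← Finset.mul_sum, hsum]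
    simp only [Finset.mem_univ, if_true, Matrix.one_apply]
    have hdj := hdne j.succ
    have hdi := hdne i.succ
    have hd0 := hdne 0
    split_ifs with h
    · subst h; field_simp; ring
    · field_simp
      ring
  have hInv : (D * Matrix.diagonal d * Dᵀ)⁻¹ = N := Matrix.inv_eq_right_inv hMN
  -- facts about C⁻¹
  have hCinv : (Matrix.diagonal d)⁻¹ = Matrix.diagonal (fun k => (d k)⁻¹) :=
    Matrix.inv_eq_right_inv (by
      rw [Matrix.diagonal_mul_diagonal]
      convert Matrix.diagonal_one with k
      exact mul_inv_cancel₀ (hdne k))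
  have hdot : (fun _ => (1:ℝ)) ⬝ᵥ (Matrix.diagonal d)⁻¹ *ᵥ (fun _ => (1:ℝ)) = s := by
    rw [hCinv]
    simp [dotProduct, Matrix.mulVec_diagonal, hs]
  refine ⟨Matrix.isUnit_det_of_right_inverse hMN, by rw [hdot]; exact hspos, ?_⟩
  rw [hInv, hdot]
  -- row/col sums of N
  have hNrow : ∀ i : Fin B', ∑ j, N i j = s⁻¹ * ((d i.succ)⁻¹ * (d 0)⁻¹) := by
    intro i
    simp only [hNapp]
    rw [Finset.sum_sub_distrib, Finset.sum_ite_eq, ← Finset.mul_sum, ← Finset.mul_sum, hsum]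
    simp only [Finset.mem_univ, if_true]
    have h0 := hdne 0
    have hi := hdne i.succ
    field_simp
    ring
  have hNcol : ∀ j : Fin B', ∑ i, N i j = s⁻¹ * ((d j.succ)⁻¹ * (d 0)⁻¹) := by
    intro j
    simp only [hNapp]
    have h1 : ∀ i : Fin B', s⁻¹ * ((d i.succ)⁻¹ * (d j.succ)⁻¹)
        = (s⁻¹ * (d j.succ)⁻¹) * (d i.succ)⁻¹ := fun i => by ring
    rw [Finset.sum_sub_distrib, Finset.sum_ite_eq',
      Finset.sum_congr rfl fun i _ => h1 i, ← Finset.mul_sum, hsum]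
    simp only [Finset.mem_univ, if_true]
    have h0 := hdne 0
    have hj := hdne j.succ
    field_simp
    ring
  -- final identity, entrywise
  ext p q
  have hcol : ∀ j, (Dᵀ * N) p j = ∑ i, D i p * N i j := by
    intro j
    rw [Matrix.mul_apply]
    simp only [Matrix.transpose_apply]
  have hRHS : ((Matrix.diagonal d)⁻¹ -
      s⁻¹ • Matrix.vecMulVec ((Matrix.diagonal d)⁻¹ *ᵥ (fun _ => (1:ℝ)))
        ((fun _ => (1:ℝ)) ᵥ* (Matrix.diagonal d)⁻¹)) p q
      = (if p = q then (d p)⁻¹ else 0) - s⁻¹ * ((d p)⁻¹ * (d q)⁻¹) := by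
    simp [hCinv, Matrix.vecMulVec_apply, Matrix.mulVec_diagonal, Matrix.vecMul_diagonal,
      Matrix.diagonal_apply, Matrix.sub_apply]
  rw [Matrix.mul_apply, hRHS]
  simp only [hcol]
  induction p using Fin.cases with
  | zero =>
    have hcol0 : ∀ j : Fin B', (∑ i, D i 0 * N i j) = -(s⁻¹ * ((d j.succ)⁻¹ * (d 0)⁻¹)) := by
      intro j
      simp only [hD0, neg_one_mul]
      rw [Finset.sum_neg_distrib, hNcol]
    simp only [hcol0]
    induction q using Fin.cases with
    | zero =>
      simp only [hD0]
      have h2 : ∀ j : Fin B', -(s⁻¹ * ((d j.succ)⁻¹ * (d 0)⁻¹)) * (-1)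
          = (s⁻¹ * (d 0)⁻¹) * (d j.succ)⁻¹ := fun j => by ring
      rw [Finset.sum_congr rfl fun j _ => h2 j, ← Finset.mul_sum, hsum]
      simp only [if_true]
      have h0 := hdne 0
      field_simp
    | succ m =>
      simp only [hDsucc]
      have h2 : ∀ j : Fin B', -(s⁻¹ * ((d j.succ)⁻¹ * (d 0)⁻¹)) * (if m = j then 1 else 0)
          = if m = j then -(s⁻¹ * ((d m.succ)⁻¹ * (d 0)⁻¹)) else 0 := by
        intro j; split_ifs with h <;> first | (subst h; ring) | ring
      rw [Finset.sum_congr rfl fun j _ => h2 j, Finset.sum_ite_eq]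
      simp only [Finset.mem_univ, if_true, if_neg (Fin.succ_ne_zero m).symm]
      ring
  | succ k =>
    have hcolk : ∀ j : Fin B', (∑ i, D i k.succ * N i j) = N k j := by
      intro j
      simp only [hDsucc, ite_mul, one_mul, zero_mul, Finset.sum_ite_eq, Finset.mem_univ,
        if_true]
    simp only [hcolk]
    induction q using Fin.cases with
    | zero =>
      simp only [hD0]
      have h2 : ∀ j : Fin B', N k j * (-1) = -(N k j) := fun j => by ring
      rw [Finset.sum_congr rfl fun j _ => h2 j, Finset.sum_neg_distrib, hNrow]
      simp only [if_neg (Fin.succ_ne_zero k)]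
      ring
    | succ m =>
      simp only [hDsucc]
      have h2 : ∀ j : Fin B', N k j * (if m = j then 1 else 0)
          = if m = j then N k m else 0 := by
        intro j; split_ifs with h <;> first | (subst h; ring) | ring
      rw [Finset.sum_congr rfl fun j _ => h2 j, Finset.sum_ite_eq]
      simp only [Finset.mem_univ, if_true, hNapp, Fin.succ_inj]

/-- For a diagonal covariance matrix `C` with positive diagonal entries, the all-ones
vector `v`, and the TDOA differencing matrix `D` (anchor 1 as reference),
`D C Dᵀ` is invertible and
`Dᵀ (D C Dᵀ)⁻¹ D = C⁻¹ − (vᵀ C⁻¹ v)⁻¹ • (C⁻¹ v)(vᵀ C⁻¹)`, with `vᵀ C⁻¹ v > 0`. -/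
theorem tdoa_projected_inverse (B : ℕ) (hB : 2 ≤ B)
    (d : Fin B → ℝ) (hd : ∀ b, 0 < d b)
    (C : Matrix (Fin B) (Fin B) ℝ) (hC : C = Matrix.diagonal d)
    (v : Fin B → ℝ) (hv : v = fun _ => 1)
    (D : Matrix (Fin (B - 1)) (Fin B) ℝ)
    (hD : ∀ i j, D i j = if (j : ℕ) = (i : ℕ) + 1 then 1
      else if (j : ℕ) = 0 then -1 else 0) :
    IsUnit (D * C * Dᵀ).det ∧
    0 < v ⬝ᵥ C⁻¹ *ᵥ v ∧
    Dᵀ * (D * C * Dᵀ)⁻¹ * D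
      = C⁻¹ - (v ⬝ᵥ C⁻¹ *ᵥ v)⁻¹ • Matrix.vecMulVec (C⁻¹ *ᵥ v) (v ᵥ* C⁻¹) := by
  obtain ⟨B', rfl⟩ : ∃ B', B = B' + 1 := ⟨B - 1, by omega⟩
  subst hC hv
  exact tdoa_aux B' d hd D hD
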